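/- arXiv:1403.2873 — 6 statements merged into one kernel-verified Lean document; each statement's English description precedes it below -/
import Mathlib

section
/- Let E be a parameter set and {(X_s, τ_s, E)}_{s ∈ S} a family of soft topological spaces, and let τ denote the product soft topology on E × (Π s, X_s). Then for every e ∈ E, the parametric topology τ_e on Π s, X_s (the topology induced from τ along the map x ↦ (e, x)) equals the product (Pi) topology of the parametric topologies (τ_s)_e on the factors X_s (each (τ_s)_e being the topology induced from τ_s along x ↦ (e, x)). -/
/-- The product soft topology on `E × (Π s, X s)`: the initial topology with respect to
the projection soft maps `(e, x) ↦ (e, x s)` into `(E × X s, τ s)`. -/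
def softProdTop {E S : Type*} {X : S → Type*}
    (τ : ∀ s, TopologicalSpace (E × X s)) : TopologicalSpace (E × ∀ s, X s) :=
  ⨅ s, TopologicalSpace.induced (fun p : E × ∀ s, X s => (p.1, p.2 s)) (τ s)

/-- The parametric topology at `e` of the product soft topology is the product (Pi)
topology of the parametric topologies at `e` of the factors. -/
theorem parametric_of_soft_product {E S : Type*} {X : S → Type*}
    (τs : ∀ s, TopologicalSpace (E × X s)) (e : E) :
    TopologicalSpace.induced (fun x : ∀ s, X s => (e, x)) (softProdTop τs) =
      ⨅ s, TopologicalSpace.induced (fun x : ∀ s, X s => x s)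
        (TopologicalSpace.induced (fun y : X s => (e, y)) (τs s)) := by
  simp only [softProdTop, induced_iInf, induced_compose]
  rfl
end

section
/- Let E be a parameter set and {(X_s, τ_s, E)}_{s ∈ S} a family of soft topological spaces, and let τ denote the sum soft topology on E × (Σ s, X_s). Then for every e ∈ E, the parametric topology τ_e on Σ s, X_s (the topology induced from τ along the map x ↦ (e, x)) equals the disjoint-union (sigma) topology of the parametric topologies (τ_s)_e on the summands X_s (each (τ_s)_e being the topology induced from τ_s along x ↦ (e, x)). -/
/-- The sum soft topology on `E × (Σ s, X s)`: the final topology with respect to the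
inclusion soft maps `(e, x) ↦ (e, ⟨s, x⟩)` from `(E × X s, τ s)`. -/
def softSumTop {E S : Type*} {X : S → Type*}
    (τ : ∀ s, TopologicalSpace (E × X s)) : TopologicalSpace (E × Σ s, X s) :=
  ⨆ s, TopologicalSpace.coinduced (fun p : E × X s => (p.1, ⟨s, p.2⟩)) (τ s)

/-- The parametric topology at `e` of the sum soft topology is the disjoint-union (sigma)
topology of the parametric topologies at `e` of the summands. -/
theorem parametric_of_soft_sum {E S : Type*} {X : S → Type*}
    (τs : ∀ s, TopologicalSpace (E × X s)) (e : E) :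
    TopologicalSpace.induced (fun x : Σ s, X s => (e, x)) (softSumTop τs) =
      ⨆ s, TopologicalSpace.coinduced (Sigma.mk s)
        (TopologicalSpace.induced (fun y : X s => (e, y)) (τs s)) := by
  refine TopologicalSpace.ext_iff.2 fun U => ?_
  rw [@isOpen_induced_iff _ _ (softSumTop τs) U _]
  rw [isOpen_iSup_iff]
  simp only [isOpen_coinduced]
  simp only [isOpen_induced_iff]
  have hsum : ∀ V : Set (E × Σ s, X s), @IsOpen _ (softSumTop τs) V ↔
      ∀ s, @IsOpen _ (τs s) ((fun p : E × X s => (p.1, ⟨s, p.2⟩)) ⁻¹' V) := fun V => by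
    show @IsOpen _ (⨆ s, TopologicalSpace.coinduced (fun p : E × X s => (p.1, ⟨s, p.2⟩)) (τs s)) V ↔ _
    rw [isOpen_iSup_iff]
    exact forall_congr' fun s => isOpen_coinduced
  simp only [hsum]
  constructor
  · rintro ⟨V, hV, rfl⟩ s
    exact ⟨(fun p : E × X s => (p.1, (⟨s, p.2⟩ : Σ s, X s))) ⁻¹' V, hV s, rfl⟩
  · intro h
    choose W hW hWU using h
    refine ⟨⋃ s, (fun p : E × X s => (p.1, (⟨s, p.2⟩ : Σ s, X s))) '' W s, fun t => ?_, ?_⟩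
    · have hpre : (fun p : E × X t => (p.1, (⟨t, p.2⟩ : Σ s, X s))) ⁻¹'
          (⋃ s, (fun p : E × X s => (p.1, (⟨s, p.2⟩ : Σ s, X s))) '' W s) = W t := by
        ext p
        simp only [Set.mem_preimage, Set.mem_iUnion, Set.mem_image]
        constructor
        · rintro ⟨s, q, hq, heq⟩
          obtain ⟨h1, h2⟩ := Prod.mk.injEq .. ▸ heq
          obtain ⟨rfl, h3⟩ := Sigma.mk.inj_iff.1 h2
          cases Prod.ext h1 (eq_of_heq h3)
          exact hq
        · exact fun hp => ⟨t, p, hp, rfl⟩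
      rw [hpre]; exact hW t
    · ext x
      obtain ⟨t, y⟩ := x
      simp only [Set.mem_preimage, Set.mem_iUnion, Set.mem_image]
      constructor
      · rintro ⟨s, ⟨q1, q2⟩, hq, heq⟩
        obtain ⟨h1, h2⟩ := Prod.mk.injEq .. ▸ heq
        obtain ⟨rfl, h3⟩ := Sigma.mk.inj_iff.1 h2
        cases h1; cases eq_of_heq h3
        exact (Set.ext_iff.1 (hWU s) q2).1 hq
      · intro hU
        exact ⟨t, (e, y), (Set.ext_iff.1 (hWU t) y).2 hU, rfl⟩
end

section
/- Let E be a parameter set and (X, τ, E), (Y, τ', E) soft topological spaces with X nonempty. If (Y, τ', E) is a soft T0-space (i.e. the topological space (E × Y, τ') is T0), then the pointwise soft function space (C(X,Y), τ_p, E) is a soft T0-space (i.e. E × C(X,Y) with the pointwise soft topology is T0). -/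
/-- The set of soft continuous maps from `(X, τ, E)` to `(Y, τ', E)`:
functions `f : X → Y` such that `Prod.map id f : E × X → E × Y` is continuous. -/
def SoftCont {E X Y : Type*} (τ : TopologicalSpace (E × X)) (τ' : TopologicalSpace (E × Y)) :=
  {f : X → Y // @Continuous _ _ τ τ' (Prod.map id f)}

/-- The pointwise soft topology on `E × C(X,Y)`: the initial topology with respect to
the evaluation maps `(e, f) ↦ (e, f x)`, for all `x : X`. -/
def pointwiseSoftTop {E X Y : Type*} (τ : TopologicalSpace (E × X))
    (τ' : TopologicalSpace (E × Y)) : TopologicalSpace (E × SoftCont τ τ') :=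
  ⨅ x : X, TopologicalSpace.induced (fun p : E × SoftCont τ τ' => (p.1, p.2.1 x)) τ'

/-- If `(Y, τ', E)` is a soft T0-space, then the pointwise soft function space
`(C(X,Y), τ_p, E)` is a soft T0-space. -/
theorem soft_T0 {E X Y : Type*} [Nonempty X]
    (τ : TopologicalSpace (E × X)) (τ' : TopologicalSpace (E × Y))
    (hY : @T0Space (E × Y) τ') :
    @T0Space (E × SoftCont τ τ') (pointwiseSoftTop τ τ') := by
  letI := pointwiseSoftTop τ τ'
  letI := τ'
  constructor
  intro p q h
  have key : ∀ x : X, (p.1, p.2.1 x) = (q.1, q.2.1 x) := by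
    intro x
    have hc : Continuous (fun r : E × SoftCont τ τ' => (r.1, r.2.1 x)) :=
      continuous_iInf_dom (i := x) continuous_induced_dom
    exact (h.map hc).eq
  obtain ⟨x⟩ := ‹Nonempty X›
  have he : p.1 = q.1 := (Prod.ext_iff.mp (key x)).1
  have hf : p.2 = q.2 := Subtype.ext (funext fun x => (Prod.ext_iff.mp (key x)).2)
  exact Prod.ext he hf
end

section
/- Let E be a parameter set and (X, τ, E), (Y, τ', E) soft topological spaces with X nonempty. If (Y, τ', E) is a soft T1-space (i.e. the topological space (E × Y, τ') is T1), then the pointwise soft function space (C(X,Y), τ_p, E) is a soft T1-space (i.e. E × C(X,Y) with the pointwise soft topology is T1). -/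
/-- If `(Y, τ', E)` is a soft T1-space, then the pointwise soft function space
`(C(X,Y), τ_p, E)` is a soft T1-space. -/
theorem soft_T1 {E X Y : Type*} [Nonempty X]
    (τ : TopologicalSpace (E × X)) (τ' : TopologicalSpace (E × Y))
    (hY : @T1Space (E × Y) τ') :
    @T1Space (E × SoftCont τ τ') (pointwiseSoftTop τ τ') := by
  letI := pointwiseSoftTop τ τ'
  rw [t1Space_iff_exists_open]
  rintro ⟨e, f⟩ ⟨e', f'⟩ h
  obtain ⟨x, hx⟩ : ∃ x : X, (e, f.1 x) ≠ (e', f'.1 x) := by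
    by_cases he : e = e'
    · subst he
      have hf : f ≠ f' := fun h' => h (by rw [h'])
      have hne : f.1 ≠ f'.1 := fun h' => hf (Subtype.ext h')
      obtain ⟨x, hx⟩ := Function.ne_iff.mp hne
      exact ⟨x, fun h' => hx (congrArg Prod.snd h')⟩
    · exact ⟨Classical.arbitrary X, fun h' => he (congrArg Prod.fst h')⟩
  obtain ⟨U, hU, hmem, hnmem⟩ := (@t1Space_iff_exists_open _ τ').mp hY hx
  refine ⟨(fun p : E × SoftCont τ τ' => (p.1, p.2.1 x)) ⁻¹' U, ?_, hmem, hnmem⟩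
  have hc : @Continuous _ _ (pointwiseSoftTop τ τ') τ'
      (fun p : E × SoftCont τ τ' => (p.1, p.2.1 x)) :=
    continuous_iInf_dom (i := x) continuous_induced_dom
  exact hc.isOpen_preimage U hU
end

section
/- Let E be a parameter set and (X, τ, E), (Y, τ', E) soft topological spaces with X nonempty. If (Y, τ', E) is a soft T2-space (i.e. the topological space (E × Y, τ') is Hausdorff), then the pointwise soft function space (C(X,Y), τ_p, E) is a soft T2-space (i.e. E × C(X,Y) with the pointwise soft topology is Hausdorff). -/
/-- If `(Y, τ', E)` is a soft T2 (Hausdorff)-space, then the pointwise soft function space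
`(C(X,Y), τ_p, E)` is a soft T2 (Hausdorff)-space. -/
theorem soft_T2 {E X Y : Type*} [Nonempty X]
    (τ : TopologicalSpace (E × X)) (τ' : TopologicalSpace (E × Y))
    (hY : @T2Space (E × Y) τ') :
    @T2Space (E × SoftCont τ τ') (pointwiseSoftTop τ τ') := by
  letI := τ'
  letI := pointwiseSoftTop τ τ'
  let F : E × SoftCont τ τ' → X → E × Y := fun p x => (p.1, p.2.1 x)
  have hind : pointwiseSoftTop τ τ' = TopologicalSpace.induced F Pi.topologicalSpace := by
    rw [pointwiseSoftTop, Pi.topologicalSpace, induced_iInf]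
    simp only [induced_compose]
    rfl
  have hinj : Function.Injective F := by
    intro p q h
    obtain ⟨x⟩ := ‹Nonempty X›
    have h1 : p.1 = q.1 := (Prod.ext_iff.mp (congrFun h x)).1
    have h2 : p.2 = q.2 := by
      apply Subtype.ext
      funext y
      exact (Prod.ext_iff.mp (congrFun h y)).2
    exact Prod.ext h1 h2
  have hemb : Topology.IsEmbedding F := ⟨⟨hind⟩, hinj⟩
  exact hemb.t2Space
end

section
/- Let E be a parameter set, {(X_s, τ_s, E)}_{s ∈ S} a family of (pairwise disjoint) soft topological spaces, and (Y, τ', E) a soft topological space. For each s let C_s = C(X_s, Y) be the set of soft continuous maps X_s → Y, and let C = C(Σ s, X_s, Y) be the set of soft continuous maps from the soft topological sum to Y. Define ∇ : (Π s, C_s) → C by ∇(F) = (fun ⟨s, x⟩ => F s x) (this is well defined: ∇(F) is soft continuous for the sum soft topology). Then the soft mapping (∇, 1_E), i.e. the map (e, F) ↦ (e, ∇ F) : E × (Π s, C_s) → E × C, is a homeomorphism, where E × (Π s, C_s) carries the product soft topology of the pointwise soft topologies on the E × C_s, and E × C carries the pointwise soft topology. -/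
/-- `∇` is well defined: for a family of soft continuous maps `F s : X s → Y`, the map
`⟨s, x⟩ ↦ F s x` is soft continuous on the soft topological sum. -/
theorem nabla_softCont {E S Y : Type*} {X : S → Type*}
    (τ : ∀ s, TopologicalSpace (E × X s)) (τ' : TopologicalSpace (E × Y))
    (F : ∀ s, SoftCont (τ s) τ') :
    @Continuous _ _ (softSumTop τ) τ'
      (Prod.map id (fun q : Σ s, X s => (F q.1).1 q.2)) := by
  refine continuous_iSup_dom.2 fun s => ?_
  exact continuous_coinduced_dom.2 (F s).2


section Nabla

variable {E S Y : Type*} {X : S → Type*}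
  (τ : ∀ s, TopologicalSpace (E × X s)) (τ' : TopologicalSpace (E × Y))

theorem continuous_softSumTop_inclusion (s : S) :
    @Continuous _ _ (τ s) (softSumTop τ) (fun p : E × X s => (p.1, ⟨s, p.2⟩)) :=
  continuous_iSup_rng (t₂ := fun s => TopologicalSpace.coinduced _ (τ s))
    continuous_coinduced_rng

def SoftCont.sigmaRestrict (g : SoftCont (softSumTop τ) τ') (s : S) : SoftCont (τ s) τ' :=
  ⟨fun x => g.1 ⟨s, x⟩, @Continuous.comp _ _ _ (τ s) (softSumTop τ) τ' _ _ g.2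
    (continuous_softSumTop_inclusion τ s)⟩

def softNablaEquiv : (∀ s, SoftCont (τ s) τ') ≃ SoftCont (softSumTop τ) τ' where
  toFun F := ⟨fun q => (F q.1).1 q.2, nabla_softCont τ τ' F⟩
  invFun g := SoftCont.sigmaRestrict τ τ' g
  left_inv _ := rfl
  right_inv _ := rfl

/-- Both topologies are initial for the evaluations `(e, F) ↦ (e, F s x)`, indexed by the
pairs `⟨s, x⟩`, grouped by `s` on the product side. -/
theorem induced_softNablaEquiv :
    TopologicalSpace.induced (Prod.map id (softNablaEquiv τ τ'))
        (pointwiseSoftTop (softSumTop τ) τ') =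
      softProdTop (fun s => pointwiseSoftTop (τ s) τ') := by
  simp only [softProdTop, pointwiseSoftTop, induced_iInf, induced_compose, iInf_sigma]
  rfl

end Nabla

/-- `∇ : Π s, C(X s, Y) → C(Σ s, X s, Y)`, `∇(F) = (fun ⟨s, x⟩ => F s x)`, induces a soft
mapping `(∇, 1_E)` which is a homeomorphism, where `E × (Π s, C(X s, Y))` carries the
product soft topology of the pointwise soft topologies and `E × C(Σ s, X s, Y)` carries
the pointwise soft topology. -/
theorem nabla_isHomeomorph {E S Y : Type*} {X : S → Type*}
    (τ : ∀ s, TopologicalSpace (E × X s)) (τ' : TopologicalSpace (E × Y)) :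
    @IsHomeomorph (E × ∀ s, SoftCont (τ s) τ') (E × SoftCont (softSumTop τ) τ')
      (softProdTop (fun s => pointwiseSoftTop (τ s) τ'))
      (pointwiseSoftTop (softSumTop τ) τ')
      (fun p => (p.1, ⟨fun q : Σ s, X s => (p.2 q.1).1 q.2, nabla_softCont τ τ' p.2⟩)) := by
  let nabla := Equiv.prodCongr (Equiv.refl E) (softNablaEquiv τ τ')
  let := softProdTop (fun s => pointwiseSoftTop (τ s) τ')
  let := pointwiseSoftTop (softSumTop τ) τ'
  have hInducing : Topology.IsInducing nabla := ⟨(induced_softNablaEquiv τ τ').symm⟩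
  exact isHomeomorph_iff_isEmbedding_surjective.2
    ⟨⟨hInducing, nabla.injective⟩, nabla.surjective⟩
end
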